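/- Let f ∈ k[x,y,z] be homogeneous of degree d, char k = 0, and H_yz = f_z∂_y − f_y∂_z. Then (d-1)·H_yz(f_y) = z·Δ_xx − x·Δ_xz and (d-1)·H_yz(f_z) = x·Δ_xy − y·Δ_xx, where Δ_xx = f_yy f_zz − f_yz², Δ_xy = f_xz f_yz − f_xy f_zz, Δ_xz = f_xy f_yz − f_xz f_yy. -/

import Mathlib

/-! Differentiating Euler's identity `x f_x + y f_y + z f_z = d f` with respect to `y` and `z`
gives `x f_xj + y f_yj + z f_zj = (d - 1) f_j` for `j = y, z`; both identities are linear
combinations of these two, with second derivatives of `f` as coefficients. -/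

open MvPolynomial

noncomputable def dX {k : Type*} [CommSemiring k] (f : MvPolynomial (Fin 3) k) :
    MvPolynomial (Fin 3) k := pderiv 0 f
noncomputable def dY {k : Type*} [CommSemiring k] (f : MvPolynomial (Fin 3) k) :
    MvPolynomial (Fin 3) k := pderiv 1 f
noncomputable def dZ {k : Type*} [CommSemiring k] (f : MvPolynomial (Fin 3) k) :
    MvPolynomial (Fin 3) k := pderiv 2 f

namespace MvPolynomial

variable {R σ : Type*}

theorem pderiv_pderiv_comm [CommSemiring R] (i j : σ) (φ : MvPolynomial σ R) :
    pderiv i (pderiv j φ) = pderiv j (pderiv i φ) := by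
  rcases eq_or_ne i j with rfl | hij
  · rfl
  induction φ using MvPolynomial.induction_on' with
  | add p q hp hq => simp only [map_add, hp, hq]
  | monomial s a =>
    have hi : (s - Finsupp.single j 1 : σ →₀ ℕ) i = s i := by simp [hij.symm]
    have hj : (s - Finsupp.single i 1 : σ →₀ ℕ) j = s j := by simp [hij]
    simp only [pderiv_monomial, hi, hj, tsub_tsub, add_comm (Finsupp.single j 1), mul_right_comm]

theorem IsHomogeneous.sum_X_mul_pderiv_pderiv [CommRing R] [Fintype σ] {n : ℕ}
    {φ : MvPolynomial σ R} (h : φ.IsHomogeneous n) (j : σ) :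
    ∑ i, X i * pderiv j (pderiv i φ) = C ((n : R) - 1) * pderiv j φ := by
  classical
  have euler := congrArg (pderiv j) h.sum_X_mul_pderiv
  simp only [map_sum, pderiv_mul, pderiv_X, Pi.single_apply, ite_mul, one_mul, zero_mul,
    Finset.sum_add_distrib, Finset.sum_ite_eq', Finset.mem_univ, if_true, map_nsmul] at euler
  rw [map_sub, map_natCast, C_1, sub_mul, one_mul, ← nsmul_eq_mul, ← euler]
  ring

end MvPolynomial

theorem stmt13_general {k : Type*} [Field k] (d : ℕ)
    (f : MvPolynomial (Fin 3) k) (hf : f.IsHomogeneous d) :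
    C ((d : k) - 1) * (dZ f * dY (dY f) - dY f * dZ (dY f))
        = X 2 * (dY (dY f) * dZ (dZ f) - dZ (dY f) ^ 2)
          - X 0 * (dY (dX f) * dZ (dY f) - dZ (dX f) * dY (dY f)) ∧
    C ((d : k) - 1) * (dZ f * dZ (dY f) - dY f * dZ (dZ f))
        = X 0 * (dZ (dX f) * dZ (dY f) - dY (dX f) * dZ (dZ f))
          - X 1 * (dY (dY f) * dZ (dZ f) - dZ (dY f) ^ 2) := by
  have eulerY := hf.sum_X_mul_pderiv_pderiv 1
  have eulerZ := hf.sum_X_mul_pderiv_pderiv 2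
  rw [Fin.sum_univ_three, pderiv_pderiv_comm 1 2] at eulerY
  rw [Fin.sum_univ_three] at eulerZ
  simp only [dX, dY, dZ]
  constructor
  · linear_combination pderiv 2 (pderiv 1 f) * eulerY - pderiv 1 (pderiv 1 f) * eulerZ
  · linear_combination pderiv 2 (pderiv 2 f) * eulerY - pderiv 2 (pderiv 1 f) * eulerZ

theorem stmt13 {k : Type*} [Field k] [CharZero k] (d : ℕ)
    (f : MvPolynomial (Fin 3) k) (hf : f.IsHomogeneous d) :
    C ((d : k) - 1) * (dZ f * dY (dY f) - dY f * dZ (dY f))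
        = X 2 * (dY (dY f) * dZ (dZ f) - dZ (dY f) ^ 2)
          - X 0 * (dY (dX f) * dZ (dY f) - dZ (dX f) * dY (dY f)) ∧
    C ((d : k) - 1) * (dZ f * dZ (dY f) - dY f * dZ (dZ f))
        = X 0 * (dZ (dX f) * dZ (dY f) - dY (dX f) * dZ (dZ f))
          - X 1 * (dY (dY f) * dZ (dZ f) - dZ (dY f) ^ 2) :=
  stmt13_general d f hf
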